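/- arXiv:1606.00781 — 4 statements merged into one kernel-verified Lean document; each statement's English description precedes it below -/
import Mathlib

section
/- Let (A, η) be a finite-dimensional commutative Frobenius algebra over a field K with basis e₁, …, e_s and Euler element 𝐞 = Σ_{a,b} η^{ab} e_a·e_b. Then for every integer g ≥ 1 and all v, u ∈ A: Σ_{i,j,a,b} η(v, e_i·e_j) η^{ia} η^{jb} ε(e_a·e_b·u·𝐞^{g−1}) = ε(v·u·𝐞^{g}). (Edge-contraction axiom ECA 2, connected case, for the 2D TQFT amplitudes Ω_{g,n}(v₁,…,vₙ) = ε(v₁⋯vₙ·𝐞^g).) -/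
/-!
The four-fold sum is `ε((m ∘ Δ)(v) · u · 𝐞^{g-1})`, where the coproduct `Δ` is dual to the
multiplication under `η`. Since `∑ i, η(x, e i) η^{ia}` is the `a`-th coordinate of `x`,
contracting the indices `i, a` in `(m ∘ Δ)(v)` leaves `∑ j b, η^{jb} v e_j e_b = v · 𝐞`.
-/

section DualBasis

variable {R M ι : Type*} [CommRing R] [AddCommGroup M] [Module R M]
  [Fintype ι] [DecidableEq ι] {η : LinearMap.BilinForm R M} {e : Module.Basis ι R M}
  {N : Matrix ι ι R}

theorem LinearMap.BilinForm.sum_apply_basis_mul_eq_repr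
    (hN : (Matrix.of fun i j => η (e i) (e j)) * N = 1) (x : M) (a : ι) :
    ∑ i, η x (e i) * N i a = e.repr x a := by
  have hx : ∀ i, η x (e i) = ∑ b, e.repr x b * η (e b) (e i) := by
    intro i
    conv_lhs => rw [← e.sum_repr x]
    simp only [map_sum, map_smul, LinearMap.sum_apply, LinearMap.smul_apply, smul_eq_mul]
  calc ∑ i, η x (e i) * N i a
      = ∑ b, e.repr x b * ((Matrix.of fun i j => η (e i) (e j)) * N) b a := by
        simp only [hx, Matrix.mul_apply, Matrix.of_apply, Finset.sum_mul, Finset.mul_sum,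
          mul_assoc]
        exact Finset.sum_comm
    _ = e.repr x a := by simp [hN, Matrix.one_apply]

/-- The dual basis of `e` with respect to `η` is `e^i = ∑ a, η^{ia} e a`, so this is the
expansion `x = ∑ i, η(x, e i) e^i`. -/
theorem LinearMap.BilinForm.sum_apply_basis_smul_eq_self
    (hN : (Matrix.of fun i j => η (e i) (e j)) * N = 1) (x : M) :
    ∑ i, ∑ a, (η x (e i) * N i a) • e a = x := by
  conv_rhs => rw [← e.sum_repr x]
  rw [Finset.sum_comm]
  simp only [← Finset.sum_smul, η.sum_apply_basis_mul_eq_repr hN]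

end DualBasis

theorem sum_apply_mul_smul_eq_mul_euler {K A ι : Type*} [CommRing K] [CommRing A]
    [Algebra K A] [Fintype ι] [DecidableEq ι] {η : LinearMap.BilinForm K A}
    (hinv : ∀ u v w : A, η (u * v) w = η u (v * w)) {e : Module.Basis ι K A}
    {N : Matrix ι ι K} (hN : (Matrix.of fun i j => η (e i) (e j)) * N = 1) (v : A) :
    ∑ i, ∑ j, ∑ a, ∑ b, (η v (e i * e j) * N i a * N j b) • (e a * e b)
      = v * ∑ a, ∑ b, N a b • (e a * e b) := by
  have hpair : ∀ i j, η v (e i * e j) = η (v * e i) (e j) := fun i j => by rw [hinv]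
  calc ∑ i, ∑ j, ∑ a, ∑ b, (η v (e i * e j) * N i a * N j b) • (e a * e b)
      = ∑ i, ∑ a, N i a • (e a * ∑ j, ∑ b, (η (v * e i) (e j) * N j b) • e b) := by
        refine Finset.sum_congr rfl fun i _ => ?_
        rw [Finset.sum_comm]
        simp only [hpair, Finset.mul_sum, Finset.smul_sum, mul_smul_comm, smul_smul]
        refine Finset.sum_congr rfl fun a _ => Finset.sum_congr rfl fun j _ =>
          Finset.sum_congr rfl fun b _ => ?_
        rw [mul_right_comm, mul_comm]
    _ = v * ∑ a, ∑ b, N a b • (e a * e b) := by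
        simp only [η.sum_apply_basis_smul_eq_self hN, Finset.mul_sum, mul_smul_comm]
        refine Finset.sum_congr rfl fun i _ => Finset.sum_congr rfl fun a _ => ?_
        rw [mul_left_comm, mul_comm (e a)]

theorem stmt7_general (K A : Type*) [Field K] [CommRing A] [Algebra K A]
    (η : LinearMap.BilinForm K A)
    (hinv : ∀ u v w : A, η (u * v) w = η u (v * w))
    {s : ℕ} (e : Module.Basis (Fin s) K A)
    (N : Matrix (Fin s) (Fin s) K)
    (hN : (Matrix.of fun i j => η (e i) (e j)) * N = 1)
    (E : A) (hE : E = ∑ a, ∑ b, N a b • (e a * e b)) :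
    ∀ g : ℕ, 1 ≤ g → ∀ v u : A,
      (∑ i, ∑ j, ∑ a, ∑ b,
          η v (e i * e j) * N i a * N j b * η 1 (e a * e b * u * E ^ (g - 1)))
        = η 1 (v * u * E ^ g) := by
  intro g hg v u
  have hcomult := sum_apply_mul_smul_eq_mul_euler hinv hN v
  rw [← hE] at hcomult
  calc _ = η 1 ((∑ i, ∑ j, ∑ a, ∑ b, (η v (e i * e j) * N i a * N j b) • (e a * e b))
          * (u * E ^ (g - 1))) := by
        simp only [Finset.sum_mul, smul_mul_assoc, map_sum, map_smul, smul_eq_mul, mul_assoc]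
    _ = η 1 (v * u * E ^ g) := by
        obtain ⟨k, rfl⟩ := Nat.exists_eq_add_of_le' hg
        rw [hcomult, Nat.add_sub_cancel, pow_succ]
        congr 1
        ring

/-- (ECA 2, connected case.) For a finite-dimensional commutative
Frobenius algebra `(A, η)` over a field `K` with basis `e₁, …, e_s`, inverse pairing
matrix `N = (η^{ij})` and Euler element `𝐞 = Σ_{a,b} η^{ab} e_a·e_b`, one has, for every
integer `g ≥ 1` and all `v, u ∈ A`:
`Σ_{i,j,a,b} η(v, e_i·e_j) η^{ia} η^{jb} ε(e_a·e_b·u·𝐞^{g−1}) = ε(v·u·𝐞^{g})`. -/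
theorem stmt7 (K A : Type*) [Field K] [CommRing A] [Algebra K A]
    (η : LinearMap.BilinForm K A)
    (hsym : ∀ u v : A, η u v = η v u)
    (hnd : ∀ v : A, (∀ u : A, η v u = 0) → v = 0)
    (hinv : ∀ u v w : A, η (u * v) w = η u (v * w))
    {s : ℕ} (e : Module.Basis (Fin s) K A)
    (N : Matrix (Fin s) (Fin s) K)
    (hN : (Matrix.of fun i j => η (e i) (e j)) * N = 1)
    (hN' : N * (Matrix.of fun i j => η (e i) (e j)) = 1)
    (E : A) (hE : E = ∑ a, ∑ b, N a b • (e a * e b)) :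
    ∀ g : ℕ, 1 ≤ g → ∀ v u : A,
      (∑ i, ∑ j, ∑ a, ∑ b,
          η v (e i * e j) * N i a * N j b * η 1 (e a * e b * u * E ^ (g - 1)))
        = η 1 (v * u * E ^ g) :=
  stmt7_general K A η hinv e N hN E hE
end

section
/- Let (A, η) be a finite-dimensional commutative Frobenius algebra over a field K with basis e₁, …, e_s and Euler element 𝐞 = Σ_{a,b} η^{ab} e_a·e_b. Then for all integers g₁, g₂ ≥ 0 and all v, u, w ∈ A: Σ_{k,ℓ,a,b} η(v, e_k·e_ℓ) η^{ka} η^{ℓb} ε(e_a·u·𝐞^{g₁}) · ε(e_b·w·𝐞^{g₂}) = ε(v·u·w·𝐞^{g₁+g₂}). (Edge-contraction axiom ECA 2, disconnected case; this is the defining identity of the twisted kernel δ* for the 2D TQFT amplitudes Ω_{g,n}(v₁,…,vₙ) = ε(v₁⋯vₙ·𝐞^g).) -/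
/-!
Since `N` is a left inverse of the Gram matrix of `η`, the sum `∑ a, N k a * η (e a) x` is the
`k`-th coordinate of `x` in the basis `e`. Contracting both index pairs therefore collapses the
left-hand side to `η v (u 𝐞^g₁ * w 𝐞^g₂)`, which invariance turns into `ε (v u w 𝐞^(g₁+g₂))`.
-/

open Matrix

theorem Module.Basis.sum_sum_repr_smul_repr_smul {R M P ι : Type*} [CommSemiring R]
    [AddCommMonoid M] [Module R M] [AddCommMonoid P] [Module R P] [Fintype ι]
    (e : Module.Basis ι R M) (B : M →ₗ[R] M →ₗ[R] P) (x y : M) :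
    ∑ k, ∑ l, e.repr x k • e.repr y l • B (e k) (e l) = B x y := by
  conv_rhs => rw [← e.sum_repr x, ← e.sum_repr y]
  simp only [map_sum, map_smul, LinearMap.sum_apply, LinearMap.smul_apply, Finset.smul_sum]
  rw [Finset.sum_comm]
  simp only [smul_comm (e.repr x _)]

namespace LinearMap.BilinForm

variable {R M ι : Type*} [CommSemiring R] [AddCommMonoid M] [Module R M] [Fintype ι]
  [DecidableEq ι] {η : LinearMap.BilinForm R M} {e : Module.Basis ι R M} {N : Matrix ι ι R}

theorem repr_eq_sum_mul_apply_basis_of_mul_toMatrix_eq_one (hN : N * toMatrix e η = 1)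
    (y : M) (k : ι) : e.repr y k = ∑ a, N k a * η (e a) y := by
  have hgram : (fun i => η (e i) y) = toMatrix e η *ᵥ e.repr y := by
    ext i
    simp [apply_eq_dotProduct_toMatrix_mulVec e η (e i) y, Finsupp.single_eq_pi_single]
  rw [← one_mulVec (e.repr y), ← hN, ← mulVec_mulVec, ← hgram]
  rfl

theorem sum_apply_basis_mul_apply_basis_of_mul_toMatrix_eq_one (hN : N * toMatrix e η = 1)
    (B : M →ₗ[R] M →ₗ[R] R) (x y : M) :
    ∑ k, ∑ l, ∑ a, ∑ b, B (e k) (e l) * N k a * N l b * η (e a) x * η (e b) y = B x y := by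
  calc _ = ∑ k, ∑ l, e.repr x k • e.repr y l • B (e k) (e l) := by
        refine Fintype.sum_congr _ _ fun k => Fintype.sum_congr _ _ fun l => ?_
        simp only [repr_eq_sum_mul_apply_basis_of_mul_toMatrix_eq_one hN, smul_eq_mul,
          Finset.sum_mul, Finset.mul_sum]
        rw [Finset.sum_comm]
        exact Fintype.sum_congr _ _ fun a => Fintype.sum_congr _ _ fun b => by ring
    _ = B x y := e.sum_sum_repr_smul_repr_smul B x y

end LinearMap.BilinForm

open LinearMap LinearMap.BilinForm in
theorem stmt8_general (K A : Type*) [Field K] [CommRing A] [Algebra K A]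
    (η : LinearMap.BilinForm K A)
    (hinv : ∀ u v w : A, η (u * v) w = η u (v * w))
    {s : ℕ} (e : Module.Basis (Fin s) K A)
    (N : Matrix (Fin s) (Fin s) K)
    (hN' : N * (Matrix.of fun i j => η (e i) (e j)) = 1)
    (E : A) :
    ∀ g₁ g₂ : ℕ, ∀ v u w : A,
      (∑ k, ∑ l, ∑ a, ∑ b,
          η v (e k * e l) * N k a * N l b
            * η 1 (e a * u * E ^ g₁) * η 1 (e b * w * E ^ g₂))
        = η 1 (v * u * w * E ^ (g₁ + g₂)) := by
  intro g₁ g₂ v u w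
  have hN : N * toMatrix e η = 1 := by
    convert hN'
    ext i j
    simp
  have hε (x y : A) : η 1 (x * y) = η x y := by rw [← hinv, one_mul]
  calc _ = ∑ k, ∑ l, ∑ a, ∑ b, (LinearMap.mul K A).compr₂ (η v) (e k) (e l) * N k a * N l b
          * η (e a) (u * E ^ g₁) * η (e b) (w * E ^ g₂) := by
        simp only [compr₂_apply, LinearMap.mul_apply', mul_assoc, hε]
    _ = η v (u * E ^ g₁ * (w * E ^ g₂)) :=
        sum_apply_basis_mul_apply_basis_of_mul_toMatrix_eq_one hN _ _ _
    _ = η 1 (v * u * w * E ^ (g₁ + g₂)) := by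
        rw [← hε, pow_add]
        ring_nf

/-- (ECA 2, disconnected case; defining identity of the twisted kernel
`δ*`.) For a finite-dimensional commutative Frobenius algebra `(A, η)` over a field `K`
with basis `e₁, …, e_s`, inverse pairing matrix `N = (η^{ij})` and Euler element
`𝐞 = Σ_{a,b} η^{ab} e_a·e_b`, one has, for all integers `g₁, g₂ ≥ 0` and all `v, u, w ∈ A`:
`Σ_{k,ℓ,a,b} η(v, e_k·e_ℓ) η^{ka} η^{ℓb} ε(e_a·u·𝐞^{g₁}) · ε(e_b·w·𝐞^{g₂})
  = ε(v·u·w·𝐞^{g₁+g₂})`. -/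
theorem stmt8 (K A : Type*) [Field K] [CommRing A] [Algebra K A]
    (η : LinearMap.BilinForm K A)
    (hsym : ∀ u v : A, η u v = η v u)
    (hnd : ∀ v : A, (∀ u : A, η v u = 0) → v = 0)
    (hinv : ∀ u v w : A, η (u * v) w = η u (v * w))
    {s : ℕ} (e : Module.Basis (Fin s) K A)
    (N : Matrix (Fin s) (Fin s) K)
    (hN : (Matrix.of fun i j => η (e i) (e j)) * N = 1)
    (hN' : N * (Matrix.of fun i j => η (e i) (e j)) = 1)
    (E : A) (hE : E = ∑ a, ∑ b, N a b • (e a * e b)) :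
    ∀ g₁ g₂ : ℕ, ∀ v u w : A,
      (∑ k, ∑ l, ∑ a, ∑ b,
          η v (e k * e l) * N k a * N l b
            * η 1 (e a * u * E ^ g₁) * η 1 (e b * w * E ^ g₂))
        = η 1 (v * u * w * E ^ (g₁ + g₂)) :=
  stmt8_general K A η hinv e N hN' E
end

section
/- (Orbifold DVV / twisted Virasoro constraint.) Let K be a field of characteristic zero and (A, η) a finite-dimensional commutative Frobenius algebra over K with basis e₁, …, e_s, Euler element 𝐞, and amplitudes Ω_{g,n}(v₁,…,vₙ) = ε(v₁⋯vₙ·𝐞^g). Suppose given, for all integers g ≥ 0, n ≥ 1, numbers T_{g,n}(k₁,…,kₙ) ∈ K for (k₁,…,kₙ) ∈ ℤ^n (with the conventions T_{g,n} := 0 whenever g < 0 and T_{g,n}(k) := 0 whenever some k_i < 0) which satisfy, for every (g,n) with 2g−2+n > 0 and every (k₁,…,kₙ) with k₁ ≥ 1: T_{g,n}(k₁,…,kₙ) = Σ_{j=2}^{n} [(2k₁+2k_j−1)!! / ((2k₁−1)!!(2k_j−1)!!)] T_{g,n−1}(k₁+k_j−1, k_{[n]∖{1,j}}) + (1/2)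 Σ_{l+m=k₁−2, l,m ≥ 0} [(2l+1)!!(2m+1)!! / (2k₁+1)!!] ( T_{g−1,n+1}(l, m, k_{[n]∖{1}}) + Σ^{stable}_{g₁+g₂=g, I⊔J={2,…,n}} T_{g₁,|I|+1}(l, k_I) T_{g₂,|J|+1}(m, k_J) ), where the superscript 'stable' means that the pairs (g₁, |I|+1) = (0,1) and (g₂, |J|+1) = (0,1) are excluded. Define T^Ω_{g,n}(k₁,…,kₙ; v₁,…,vₙ) := T_{g,n}(k₁,…,kₙ) · Ω_{g,n}(v₁,…,vₙ). Then for every (g,n) with 2g−2+n > 0, every k with k₁ ≥ 1 and all v₁,…,vₙ ∈ A: T^Ω_{g,n}(k; v₁,…,vₙ) = Σ_{j=2}^{n} [(2k₁+2k_j−1)!! / ((2k₁−1)!!(2k_j−1)!!)] T^Ω_{g,n−1}(k₁+k_j−1, k_{[n]∖{1,j}}; v₁·v_j, v_{[n]∖{1,j}}) + (1/2) Σ_{l+m=k₁−2} [(2l+1)!!(2m+1)!! / (2k₁+1)!!] ( Σ_{i,j,a,b} η(v₁, e_i·e_j) η^{ia} η^{jb} T^Ω_{g−1,n+1}(l, m,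 k_{[n]∖{1}}; e_a, e_b, v_{[n]∖{1}}) + Σ^{stable}_{g₁+g₂=g, I⊔J={2,…,n}} Σ_{p,q,a,b} η(v₁, e_p·e_q) η^{pa} η^{qb} T^Ω_{g₁,|I|+1}(l, k_I; e_a, v_I) T^Ω_{g₂,|J|+1}(m, k_J; e_b, v_J) ). -/
/-- The subtuple of a tuple `f : Fin m → α` indexed by a finite set `S` of indices,
taken in increasing order. -/
noncomputable def subT {α : Type*} {m : ℕ} (f : Fin m → α) (S : Finset (Fin m)) :
    Fin S.card → α :=
  fun i => f (S.orderIsoOfFin rfl i)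

/-- The odd double factorial `(2k−1)!! = Π_{i=1}^{k} (2i−1)`, with `(−1)!! = 1`;
note `(2k+1)!! = oddDF K (k+1)`. -/
noncomputable def oddDF (K : Type*) [Field K] (k : ℕ) : K :=
  ∏ i ∈ Finset.range k, (2 * (i : K) + 1)

/-- The 2D TQFT twist `T^Ω_{g,n}(k; v₁,…,vₙ) := T_{g,n}(k)·Ω_{g,n}(v₁,…,vₙ)` of the
correlators `T`, where `Ω_{g,n}(v₁,…,vₙ) = ε(v₁⋯vₙ·𝐞^g)`, `ε = η(1,·)` and `E = 𝐞` is the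
Euler element (for `g < 0` the convention `T_{g,n} = 0` makes the value vanish). -/
noncomputable def twistT {K A : Type*} [Field K] [CommRing A] [Algebra K A]
    (η : LinearMap.BilinForm K A) (E : A)
    (T : ℤ → (n : ℕ) → (Fin n → ℕ) → K)
    (g : ℤ) (n : ℕ) (k : Fin n → ℕ) (v : Fin n → A) : K :=
  T g n k * η 1 ((∏ i, v i) * E ^ g.toNat)

/-! The amplitudes `Ω_{g,n}(v) = ε(v₁⋯vₙ·𝐞^g)` obey the gluing rules of a 2D TQFT: replacing
`v₁, v_j` by `v₁·v_j`, contracting `v₁` with a handle through the copairing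
`Σ η^{ia} η^{jb} e_a ⊗ e_b` (which produces one factor `𝐞`), or splitting it into two
amplitudes along the copairing, all give back `Ω_{g,n}(v)`. Hence every term of the twisted
recursion is the matching term of the recursion for `T`, multiplied by `Ω_{g,n}(v)`. The copairing
identities come from the expansion `Σ_{i,a} η(x, e_i) η^{ia} e_a = x`, and the genus `-1` term
vanishes on both sides because `T_{-1,n} = 0`. -/

open Finset

section DualBasis

variable {K M : Type*} [CommRing K] [AddCommMonoid M] [Module K M] {η : LinearMap.BilinForm K M}
  {s : ℕ} {e : Module.Basis (Fin s) K M} {N : Matrix (Fin s) (Fin s) K}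

theorem sum_bilin_basis_mul_eq_repr (hN : (Matrix.of fun i j => η (e i) (e j)) * N = 1)
    (x : M) (a : Fin s) : ∑ i, η x (e i) * N i a = e.repr x a := by
  have hlin : (∑ i, N i a • η.flip (e i)) = e.coord a := e.ext fun c => by
    simpa [Matrix.mul_apply, Matrix.one_apply, Finsupp.single_apply, mul_comm, eq_comm]
      using congrFun (congrFun hN c) a
  simpa [mul_comm] using LinearMap.congr_fun hlin x

theorem sum_bilin_basis_mul_bilin (hN : (Matrix.of fun i j => η (e i) (e j)) * N = 1)
    (x y : M) : ∑ i, ∑ a, η x (e i) * N i a * η (e a) y = η x y := by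
  conv_rhs => rw [← e.sum_repr x]
  simp only [map_sum, LinearMap.map_smul₂, LinearMap.sum_apply, smul_eq_mul,
    ← sum_bilin_basis_mul_eq_repr hN x, sum_mul]
  exact sum_comm

end DualBasis

section Copairing

variable {K A : Type*} [CommRing K] [CommRing A] [Algebra K A] {η : LinearMap.BilinForm K A}
  (hinv : ∀ u v w : A, η (u * v) w = η u (v * w))
include hinv

theorem bilin_one_mul_of_invariant (x y : A) : η 1 (x * y) = η x y := by
  rw [← hinv, one_mul]

variable {s : ℕ} {e : Module.Basis (Fin s) K A} {N : Matrix (Fin s) (Fin s) K}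
  (hN : (Matrix.of fun i j => η (e i) (e j)) * N = 1)
include hN

theorem copairing_contract_handle {E : A} (hE : E = ∑ a, ∑ b, N a b • (e a * e b)) (u X : A) :
    ∑ i, ∑ j, ∑ a, ∑ b, η u (e i * e j) * N i a * N j b * η 1 (e a * (e b * X)) =
      η 1 (u * (E * X)) := by
  calc _ = ∑ i, ∑ a, N i a * ∑ j, ∑ b, η (u * e i) (e j) * N j b * η (e b) (e a * X) := by
        refine sum_congr rfl fun i _ => ?_
        rw [sum_comm]
        refine sum_congr rfl fun a _ => ?_
        simp only [mul_sum]
        refine sum_congr rfl fun j _ => sum_congr rfl fun b _ => ?_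
        rw [mul_left_comm (e a), ← hinv, bilin_one_mul_of_invariant hinv]
        ring
    _ = ∑ i, ∑ a, N i a * η u (e i * (e a * X)) := by
        refine sum_congr rfl fun i _ => sum_congr rfl fun a _ => ?_
        rw [sum_bilin_basis_mul_bilin hN, hinv]
    _ = η 1 (u * (E * X)) := by
        simp only [bilin_one_mul_of_invariant hinv, hE, sum_mul, map_sum, smul_mul_assoc,
          map_smul, smul_eq_mul, mul_assoc]

theorem copairing_contract_split (u Y Z : A) :
    ∑ p, ∑ q, ∑ a, ∑ b, η u (e p * e q) * N p a * N q b * (η 1 (e a * Y) * η 1 (e b * Z)) =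
      η 1 (u * (Y * Z)) := by
  calc _ = ∑ p, ∑ a, N p a * η (e a) Y * ∑ q, ∑ b, η (u * e p) (e q) * N q b * η (e b) Z := by
        refine sum_congr rfl fun p _ => ?_
        rw [sum_comm]
        refine sum_congr rfl fun a _ => ?_
        simp only [mul_sum]
        refine sum_congr rfl fun q _ => sum_congr rfl fun b _ => ?_
        rw [bilin_one_mul_of_invariant hinv, bilin_one_mul_of_invariant hinv, ← hinv]
        ring
    _ = ∑ p, ∑ a, η (u * Z) (e p) * N p a * η (e a) Y := by
        refine sum_congr rfl fun p _ => sum_congr rfl fun a _ => ?_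
        rw [sum_bilin_basis_mul_bilin hN, hinv, mul_comm (e p), ← hinv]
        ring
    _ = η 1 (u * (Y * Z)) := by
        rw [sum_bilin_basis_mul_bilin hN, ← bilin_one_mul_of_invariant hinv, mul_assoc,
          mul_comm Z]

end Copairing

theorem prod_subT {M : Type*} [CommMonoid M] {m : ℕ} (f : Fin m → M) (S : Finset (Fin m)) :
    ∏ i, subT f S i = ∏ x ∈ S, f x := by
  rw [← prod_coe_sort S f]
  exact Fintype.prod_equiv (S.orderIsoOfFin rfl).toEquiv _ _ fun _ => rfl

theorem prod_cons_mul_subT_compl_singleton {M : Type*} [CommMonoid M] {m : ℕ}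
    (v : Fin (m + 1) → M) (j : Fin m) :
    ∏ i, (Fin.cons (v 0 * v j.succ) (subT (Fin.tail v) {j}ᶜ) : Fin (_ + 1) → M) i = ∏ i, v i := by
  rw [Fin.prod_cons, prod_subT, compl_singleton, Fin.prod_univ_succ, mul_assoc]
  exact congrArg _ (mul_prod_erase univ (Fin.tail v) (mem_univ j))

section Twist

variable {K A : Type*} [Field K] [CommRing A] [Algebra K A] {η : LinearMap.BilinForm K A}
  {E : A} {T : ℤ → (n : ℕ) → (Fin n → ℕ) → K}

theorem twistT_cons_mul_subT_compl_singleton (g : ℤ) {m : ℕ} (j : Fin m)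
    (k : Fin (({j}ᶜ : Finset (Fin m)).card + 1) → ℕ) (v : Fin (m + 1) → A) :
    twistT η E T g _ k (Fin.cons (v 0 * v j.succ) (subT (Fin.tail v) {j}ᶜ)) =
      T g _ k * η 1 ((∏ i, v i) * E ^ g.toNat) := by
  rw [twistT, prod_cons_mul_subT_compl_singleton]

variable (hinv : ∀ u v w : A, η (u * v) w = η u (v * w))
  {s : ℕ} {e : Module.Basis (Fin s) K A} {N : Matrix (Fin s) (Fin s) K}
  (hN : (Matrix.of fun i j => η (e i) (e j)) * N = 1)
include hinv hN

theorem sum_copairing_twistT_handle (hE : E = ∑ a, ∑ b, N a b • (e a * e b))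
    (hTneg : ∀ g : ℤ, g < 0 → ∀ (n : ℕ) (k : Fin n → ℕ), T g n k = 0)
    (g : ℕ) {m : ℕ} (k : Fin (m + 2) → ℕ) (v : Fin (m + 1) → A) :
    ∑ i, ∑ j, ∑ a, ∑ b, η (v 0) (e i * e j) * N i a * N j b *
        twistT η E T ((g : ℤ) - 1) (m + 2) k (Fin.cons (e a) (Fin.cons (e b) (Fin.tail v))) =
      T ((g : ℤ) - 1) (m + 2) k * η 1 ((∏ i, v i) * E ^ g) := by
  cases g with
  | zero => simp [twistT, hTneg]
  | succ g =>
    have hg : ((g + 1 : ℕ) - 1 : ℤ).toNat = g := by omega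
    simp only [twistT, Fin.prod_cons, hg, mul_assoc (e _), mul_left_comm _ (T _ _ _), ← mul_sum,
      copairing_contract_handle hinv hN hE, Fin.prod_univ_succ v, pow_succ', Fin.tail]
    congr 2
    ring

theorem sum_copairing_twistT_split {g g₁ : ℕ} (hg : g₁ ≤ g) {m : ℕ} (S : Finset (Fin m))
    (k₁ : Fin (S.card + 1) → ℕ) (k₂ : Fin (Sᶜ.card + 1) → ℕ) (v : Fin (m + 1) → A) :
    ∑ p, ∑ q, ∑ a, ∑ b, η (v 0) (e p * e q) * N p a * N q b *
        (twistT η E T g₁ (S.card + 1) k₁ (Fin.cons (e a) (subT (Fin.tail v) S)) *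
          twistT η E T ((g : ℤ) - g₁) (Sᶜ.card + 1) k₂ (Fin.cons (e b) (subT (Fin.tail v) Sᶜ))) =
      T g₁ (S.card + 1) k₁ * T ((g : ℤ) - g₁) (Sᶜ.card + 1) k₂ * η 1 ((∏ i, v i) * E ^ g) := by
  have hg₂ : ((g : ℤ) - g₁).toNat = g - g₁ := by omega
  simp only [twistT, Fin.prod_cons, prod_subT, hg₂, Int.toNat_natCast, mul_assoc (e _),
    mul_mul_mul_comm (T _ _ _), mul_left_comm _ (T _ _ _ * T _ _ _), ← mul_sum,
    copairing_contract_split hinv hN]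
  congr 2
  rw [Fin.prod_univ_succ, ← pow_mul_pow_sub E hg]
  change _ = (v 0 * ∏ i, Fin.tail v i) * _
  rw [← prod_mul_prod_compl S (Fin.tail v)]
  ring

end Twist

theorem stmt11_general (K A : Type*) [Field K] [CommRing A] [Algebra K A]
    (η : LinearMap.BilinForm K A)
    (hinv : ∀ u v w : A, η (u * v) w = η u (v * w))
    {s : ℕ} (e : Module.Basis (Fin s) K A)
    (N : Matrix (Fin s) (Fin s) K)
    (hN : (Matrix.of fun i j => η (e i) (e j)) * N = 1)
    (E : A) (hE : E = ∑ a, ∑ b, N a b • (e a * e b))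
    (T : ℤ → (n : ℕ) → (Fin n → ℕ) → K)
    (hTneg : ∀ g : ℤ, g < 0 → ∀ (n : ℕ) (k : Fin n → ℕ), T g n k = 0)
    (hrec : ∀ (g m : ℕ) (k : Fin (m + 1) → ℕ),
      0 < 2 * (g : ℤ) - 2 + (m + 1) → 1 ≤ k 0 →
      T g (m + 1) k =
        (∑ j : Fin m,
            oddDF K (k 0 + k j.succ) / (oddDF K (k 0) * oddDF K (k j.succ)) *
              T g (({j}ᶜ : Finset (Fin m)).card + 1)
                (Fin.cons (k 0 + k j.succ - 1) (subT (Fin.tail k) {j}ᶜ)))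
        + (1 / 2 : K) * ∑ l ∈ Finset.range (k 0 - 1),
            oddDF K (l + 1) * oddDF K (k 0 - 2 - l + 1) / oddDF K (k 0 + 1) *
              (T ((g : ℤ) - 1) (m + 2)
                  (Fin.cons l (Fin.cons (k 0 - 2 - l) (Fin.tail k)))
                + ∑ g₁ ∈ Finset.range (g + 1), ∑ S : Finset (Fin m),
                    if (g₁ = 0 ∧ S = ∅) ∨ (g₁ = g ∧ S = Finset.univ) then 0
                    else
                      T g₁ (S.card + 1) (Fin.cons l (subT (Fin.tail k) S)) *
                        T ((g : ℤ) - g₁) (Sᶜ.card + 1)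
                          (Fin.cons (k 0 - 2 - l) (subT (Fin.tail k) Sᶜ)))) :
    ∀ (g m : ℕ) (k : Fin (m + 1) → ℕ) (v : Fin (m + 1) → A),
      0 < 2 * (g : ℤ) - 2 + (m + 1) → 1 ≤ k 0 →
      twistT η E T g (m + 1) k v =
        (∑ j : Fin m,
            oddDF K (k 0 + k j.succ) / (oddDF K (k 0) * oddDF K (k j.succ)) *
              twistT η E T g (({j}ᶜ : Finset (Fin m)).card + 1)
                (Fin.cons (k 0 + k j.succ - 1) (subT (Fin.tail k) {j}ᶜ))
                (Fin.cons (v 0 * v j.succ) (subT (Fin.tail v) {j}ᶜ)))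
        + (1 / 2 : K) * ∑ l ∈ Finset.range (k 0 - 1),
            oddDF K (l + 1) * oddDF K (k 0 - 2 - l + 1) / oddDF K (k 0 + 1) *
              ((∑ i, ∑ j, ∑ a, ∑ b,
                  η (v 0) (e i * e j) * N i a * N j b *
                    twistT η E T ((g : ℤ) - 1) (m + 2)
                      (Fin.cons l (Fin.cons (k 0 - 2 - l) (Fin.tail k)))
                      (Fin.cons (e a) (Fin.cons (e b) (Fin.tail v))))
                + ∑ g₁ ∈ Finset.range (g + 1), ∑ S : Finset (Fin m),
                    if (g₁ = 0 ∧ S = ∅) ∨ (g₁ = g ∧ S = Finset.univ) then 0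
                    else
                      ∑ p, ∑ q, ∑ a, ∑ b,
                        η (v 0) (e p * e q) * N p a * N q b *
                          (twistT η E T g₁ (S.card + 1)
                              (Fin.cons l (subT (Fin.tail k) S))
                              (Fin.cons (e a) (subT (Fin.tail v) S)) *
                            twistT η E T ((g : ℤ) - g₁) (Sᶜ.card + 1)
                              (Fin.cons (k 0 - 2 - l) (subT (Fin.tail k) Sᶜ))
                              (Fin.cons (e b) (subT (Fin.tail v) Sᶜ)))) := by

  intro g m k v hst hk
  rw [twistT, hrec g m k hst hk, add_mul, sum_mul, mul_assoc, sum_mul, Int.toNat_natCast]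
  congr 1
  · refine sum_congr rfl fun j _ => ?_
    rw [twistT_cons_mul_subT_compl_singleton, Int.toNat_natCast, mul_assoc]
  · refine congrArg _ (sum_congr rfl fun l _ => ?_)
    rw [mul_assoc, add_mul, sum_copairing_twistT_handle hinv hN hE hTneg, sum_mul]
    refine congrArg _ (congrArg _ (sum_congr rfl fun g₁ hg₁ => ?_))
    rw [sum_mul]
    refine sum_congr rfl fun S _ => ?_
    split_ifs
    · rw [zero_mul]
    · rw [sum_copairing_twistT_split hinv hN (Nat.lt_succ_iff.mp (mem_range.mp hg₁))]

/-- (Orbifold DVV / twisted Virasoro constraint.) If the correlators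
`T_{g,n}(k₁,…,kₙ)` satisfy the DVV-type recursion, then their twists
`T^Ω_{g,n}(k; v) = T_{g,n}(k)·Ω_{g,n}(v)` by the 2D TQFT of the Frobenius algebra `(A, η)`
satisfy the orbifold DVV equation, in which the genus–reduction and stable splitting terms
are contracted through the coproduct coefficients
`Σ η(v₁, e_i·e_j) η^{ia} η^{jb} (…e_a…)(…e_b…)`. -/
theorem stmt11 (K A : Type*) [Field K] [CharZero K] [CommRing A] [Algebra K A]
    (η : LinearMap.BilinForm K A)
    (hsym : ∀ u v : A, η u v = η v u)
    (hnd : ∀ v : A, (∀ u : A, η v u = 0) → v = 0)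
    (hinv : ∀ u v w : A, η (u * v) w = η u (v * w))
    {s : ℕ} (e : Module.Basis (Fin s) K A)
    (N : Matrix (Fin s) (Fin s) K)
    (hN : (Matrix.of fun i j => η (e i) (e j)) * N = 1)
    (hN' : N * (Matrix.of fun i j => η (e i) (e j)) = 1)
    (E : A) (hE : E = ∑ a, ∑ b, N a b • (e a * e b))
    (T : ℤ → (n : ℕ) → (Fin n → ℕ) → K)
    (hTneg : ∀ g : ℤ, g < 0 → ∀ (n : ℕ) (k : Fin n → ℕ), T g n k = 0)
    (hrec : ∀ (g m : ℕ) (k : Fin (m + 1) → ℕ),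
      0 < 2 * (g : ℤ) - 2 + (m + 1) → 1 ≤ k 0 →
      T g (m + 1) k =
        (∑ j : Fin m,
            oddDF K (k 0 + k j.succ) / (oddDF K (k 0) * oddDF K (k j.succ)) *
              T g (({j}ᶜ : Finset (Fin m)).card + 1)
                (Fin.cons (k 0 + k j.succ - 1) (subT (Fin.tail k) {j}ᶜ)))
        + (1 / 2 : K) * ∑ l ∈ Finset.range (k 0 - 1),
            oddDF K (l + 1) * oddDF K (k 0 - 2 - l + 1) / oddDF K (k 0 + 1) *
              (T ((g : ℤ) - 1) (m + 2)
                  (Fin.cons l (Fin.cons (k 0 - 2 - l) (Fin.tail k)))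
                + ∑ g₁ ∈ Finset.range (g + 1), ∑ S : Finset (Fin m),
                    if (g₁ = 0 ∧ S = ∅) ∨ (g₁ = g ∧ S = Finset.univ) then 0
                    else
                      T g₁ (S.card + 1) (Fin.cons l (subT (Fin.tail k) S)) *
                        T ((g : ℤ) - g₁) (Sᶜ.card + 1)
                          (Fin.cons (k 0 - 2 - l) (subT (Fin.tail k) Sᶜ)))) :
    ∀ (g m : ℕ) (k : Fin (m + 1) → ℕ) (v : Fin (m + 1) → A),
      0 < 2 * (g : ℤ) - 2 + (m + 1) → 1 ≤ k 0 →
      twistT η E T g (m + 1) k v =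
        (∑ j : Fin m,
            oddDF K (k 0 + k j.succ) / (oddDF K (k 0) * oddDF K (k j.succ)) *
              twistT η E T g (({j}ᶜ : Finset (Fin m)).card + 1)
                (Fin.cons (k 0 + k j.succ - 1) (subT (Fin.tail k) {j}ᶜ))
                (Fin.cons (v 0 * v j.succ) (subT (Fin.tail v) {j}ᶜ)))
        + (1 / 2 : K) * ∑ l ∈ Finset.range (k 0 - 1),
            oddDF K (l + 1) * oddDF K (k 0 - 2 - l + 1) / oddDF K (k 0 + 1) *
              ((∑ i, ∑ j, ∑ a, ∑ b,
                  η (v 0) (e i * e j) * N i a * N j b *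
                    twistT η E T ((g : ℤ) - 1) (m + 2)
                      (Fin.cons l (Fin.cons (k 0 - 2 - l) (Fin.tail k)))
                      (Fin.cons (e a) (Fin.cons (e b) (Fin.tail v))))
                + ∑ g₁ ∈ Finset.range (g + 1), ∑ S : Finset (Fin m),
                    if (g₁ = 0 ∧ S = ∅) ∨ (g₁ = g ∧ S = Finset.univ) then 0
                    else
                      ∑ p, ∑ q, ∑ a, ∑ b,
                        η (v 0) (e p * e q) * N p a * N q b *
                          (twistT η E T g₁ (S.card + 1)
                              (Fin.cons l (subT (Fin.tail k) S))
                              (Fin.cons (e a) (subT (Fin.tail v) S)) *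
                            twistT η E T ((g : ℤ) - g₁) (Sᶜ.card + 1)
                              (Fin.cons (k 0 - 2 - l) (subT (Fin.tail k) Sᶜ))
                              (Fin.cons (e b) (subT (Fin.tail v) Sᶜ)))) :=
  stmt11_general K A η hinv e N hN E hE T hTneg hrec
end

section
/- (The Euler element of the center of the group algebra is the sum of all commutators.) Let G be a finite group. Then in ℚ[G]: Σ_C |Z_G(r_C)| · z_C · z_{C⁻¹} = Σ_{(a,b) ∈ G×G} a·b·a⁻¹·b⁻¹, where the sum on the left ranges over all conjugacy classes C of G and r_C ∈ C is any choice of representative (the summand does not depend on this choice). In other words, the Euler element of the Frobenius algebra given by the span of the class sums, with pairing η(u,v) = coeff₁(u·v)/|G| for which {z_C} and {|Z_G(r_C)|·z_{C⁻¹}} are dual bases, equals the sum of all commutators of G. -/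
/-- The conjugacy class `[r] = {c·r·c⁻¹ : c ∈ G}` of `r`, as a finset of the finite
group `G`. -/
noncomputable def conjCl (G : Type*) [Group G] [Fintype G] [DecidableEq G] (r : G) :
    Finset G :=
  Finset.univ.filter (fun x => ∃ c : G, c * r * c⁻¹ = x)

/-- The class sum `z_{[r]} = Σ_{σ ∈ [r]} σ ∈ ℚ[G]` of the conjugacy class of `r`. -/
noncomputable def classSum (G : Type*) [Group G] [Fintype G] [DecidableEq G] (r : G) :
    MonoidAlgebra ℚ G :=
  ∑ σ ∈ conjCl G r, MonoidAlgebra.single σ 1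

/-!
For fixed `b`, the map `a ↦ a b a⁻¹` covers the class `[b]`, each element exactly
`|Z_G(b)|` times, so `Σ_a a b a⁻¹ b⁻¹ = |Z_G(b)| · z_{[b]} · b⁻¹`. Summing over the `b`
in a class `C`, the factors `|Z_G(b)|` and `z_{[b]}` are constant and the `b⁻¹` add up
to `z_{C⁻¹}`.
-/

open Finset MonoidAlgebra

section

variable {G : Type*} [Group G] [Fintype G] [DecidableEq G]

lemma mem_conjCl {r x : G} : x ∈ conjCl G r ↔ IsConj r x := by
  simp [conjCl, isConj_iff]

lemma conjCl_eq_filter_mk {r : G} {C : ConjClasses G} (h : ConjClasses.mk r = C) :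
    conjCl G r = univ.filter fun b => ConjClasses.mk b = C := by
  ext b
  rw [mem_conjCl, mem_filter, ← h, ConjClasses.mk_eq_mk_iff_isConj]
  exact ⟨fun hb => ⟨mem_univ b, hb.symm⟩, fun hb => hb.2.symm⟩

lemma conjCl_eq_of_isConj {r b : G} (h : IsConj r b) : conjCl G b = conjCl G r :=
  (conjCl_eq_filter_mk (ConjClasses.mk_eq_mk_iff_isConj.mpr h.symm)).trans
    (conjCl_eq_filter_mk rfl).symm

lemma conjCl_inv (r : G) : conjCl G r⁻¹ = (conjCl G r).image (·⁻¹) := by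
  ext y
  simp only [conjCl, mem_filter, mem_univ, true_and, mem_image]
  constructor
  · rintro ⟨c, rfl⟩
    exact ⟨c * r * c⁻¹, ⟨c, rfl⟩, by group⟩
  · rintro ⟨_, ⟨c, rfl⟩, rfl⟩
    exact ⟨c, by group⟩

lemma classSum_inv (r : G) : classSum G r⁻¹ = ∑ b ∈ conjCl G r, single b⁻¹ 1 := by
  rw [classSum, conjCl_inv, sum_image fun _ _ _ _ h => inv_injective h]

lemma card_filter_conj_eq_card_centralizer {b x : G} (hx : IsConj b x) :
    #{a | a * b * a⁻¹ = x} = Nat.card (Subgroup.centralizer ({b} : Set G)) := by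
  obtain ⟨c, rfl⟩ := isConj_iff.mp hx
  have hfiber : (univ.filter fun a : G => a * b * a⁻¹ = c * b * c⁻¹) =
      (univ.filter fun a : G => a * b = b * a).map (mulLeftEmbedding c) := by
    ext a
    simp only [mem_filter, mem_univ, true_and, mem_map, mulLeftEmbedding_apply]
    refine ⟨fun h => ⟨c⁻¹ * a, ?_, by group⟩, fun ⟨z, hz, ha⟩ => ?_⟩
    · calc c⁻¹ * a * b = c⁻¹ * (a * b * a⁻¹) * a := by group
        _ = b * (c⁻¹ * a) := by rw [h]; group
    · rw [← ha]
      calc c * z * b * (c * z)⁻¹ = c * (z * b) * z⁻¹ * c⁻¹ := by group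
        _ = c * b * c⁻¹ := by rw [hz]; group
  rw [hfiber, card_map, ← Fintype.card_subtype, ← Nat.card_eq_fintype_card]
  exact Nat.card_congr <|
    Equiv.subtypeEquivRight fun _ => Subgroup.mem_centralizer_singleton_iff.symm

lemma sum_conj_eq_card_centralizer_smul {M : Type*} [AddCommMonoid M] (f : G → M) (b : G) :
    ∑ a, f (a * b * a⁻¹) =
      Nat.card (Subgroup.centralizer ({b} : Set G)) • ∑ x ∈ conjCl G b, f x := by
  have himage : univ.image (fun a => a * b * a⁻¹) = conjCl G b := by
    ext x; simp [conjCl]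
  rw [sum_comp f, himage, smul_sum]
  exact sum_congr rfl fun x hx => by
    rw [card_filter_conj_eq_card_centralizer (mem_conjCl.mp hx)]

lemma card_centralizer_mul_card_conjCl (b : G) :
    Nat.card (Subgroup.centralizer ({b} : Set G)) * #(conjCl G b) = Fintype.card G := by
  simpa using (sum_conj_eq_card_centralizer_smul (M := ℕ) (fun _ => 1) b).symm

lemma card_centralizer_eq_of_isConj {r b : G} (h : IsConj r b) :
    Nat.card (Subgroup.centralizer ({b} : Set G)) =
      Nat.card (Subgroup.centralizer ({r} : Set G)) := by
  have hpos : 0 < #(conjCl G r) := card_pos.mpr ⟨r, mem_conjCl.mpr (IsConj.refl r)⟩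
  apply Nat.eq_of_mul_eq_mul_right hpos
  rw [← conjCl_eq_of_isConj h, card_centralizer_mul_card_conjCl,
    conjCl_eq_of_isConj h, card_centralizer_mul_card_conjCl]

lemma sum_single_commutator_eq (b : G) :
    ∑ a, single (a * b * a⁻¹ * b⁻¹) (1 : ℚ) =
      Nat.card (Subgroup.centralizer ({b} : Set G)) • (classSum G b * single b⁻¹ 1) := by
  rw [sum_conj_eq_card_centralizer_smul (fun x => single (x * b⁻¹) (1 : ℚ)), classSum, sum_mul]
  simp only [single_mul_single, one_mul]

lemma sum_conjCl_smul_classSum_mul_single (r : G) :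
    ∑ b ∈ conjCl G r, Nat.card (Subgroup.centralizer ({b} : Set G)) •
        (classSum G b * single b⁻¹ (1 : ℚ)) =
      Nat.card (Subgroup.centralizer ({r} : Set G)) • (classSum G r * classSum G r⁻¹) := by
  have hb : ∀ b ∈ conjCl G r, Nat.card (Subgroup.centralizer ({b} : Set G)) •
      (classSum G b * single b⁻¹ (1 : ℚ)) =
      Nat.card (Subgroup.centralizer ({r} : Set G)) • (classSum G r * single b⁻¹ 1) :=
    fun b hb => by
      rw [card_centralizer_eq_of_isConj (mem_conjCl.mp hb), classSum,
        conjCl_eq_of_isConj (mem_conjCl.mp hb), ← classSum]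
  rw [sum_congr rfl hb, ← smul_sum, ← mul_sum, classSum_inv]

end

/-- (The Euler element of the center of the group algebra is the sum of
all commutators.) For a finite group `G` and any choice `rep` of representatives of the
conjugacy classes of `G` (the summands do not depend on this choice), in `ℚ[G]`:
`Σ_C |Z_G(r_C)| · z_C · z_{C⁻¹} = Σ_{(a,b) ∈ G×G} a·b·a⁻¹·b⁻¹`, the sum on the left
ranging over all conjugacy classes `C` of `G`.  In other words, the Euler element of the
Frobenius algebra spanned by the class sums, with pairing `η(u,v) = coeff₁(u·v)/|G|` for
which `{z_C}` and `{|Z_G(r_C)|·z_{C⁻¹}}` are dual bases, equals the sum of all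
commutators of `G`. -/
theorem stmt16 (G : Type*) [Group G] [Fintype G] [DecidableEq G]
    (rep : ConjClasses G → G)
    (hrep : ∀ C : ConjClasses G, ConjClasses.mk (rep C) = C) :
    ∑ C : ConjClasses G,
        (Nat.card (Subgroup.centralizer ({rep C} : Set G)) : ℚ) •
          (classSum G (rep C) * classSum G (rep C)⁻¹) =
      ∑ p : G × G, MonoidAlgebra.single (p.1 * p.2 * p.1⁻¹ * p.2⁻¹) (1 : ℚ) := by
  rw [Fintype.sum_prod_type, sum_comm]
  simp_rw [sum_single_commutator_eq, Nat.cast_smul_eq_nsmul]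
  conv_rhs => rw [← sum_fiberwise univ ConjClasses.mk]
  refine sum_congr rfl fun C _ => ?_
  rw [← conjCl_eq_filter_mk (hrep C), sum_conjCl_smul_classSum_mul_single]
end
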